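/- arXiv:1803.00762 — 6 statements merged into one kernel-verified Lean document; each statement's English description precedes it below -/
import Mathlib

section
/- For every real number p < 0, the function f_p(x) = x/(p·x + 1 - p) is operator monotone on the interval [0, 1 - 1/p); that is, for self-adjoint operators A ≤ B with spectra contained in [0, 1 - 1/p), one has f_p(A) ≤ f_p(B). -/
/-!
Writing `g(x) = p x + (1 - p)`, one has `f_p = 1/p + ((p - 1)/p) · g⁻¹` wherever `g ≠ 0`, and
`(p - 1)/p > 0`. On `[0, 1 - 1/p)` the affine map `g` is positive, and since `p < 0` it reverses
the order: `A ≤ B` gives `0 < g(B) ≤ g(A)`. Inversion is antitone on strictly positive elements of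
a C⋆-algebra, so `g(A)⁻¹ ≤ g(B)⁻¹`, whence `f_p(A) ≤ f_p(B)`.
-/

/-- The scalar function `f_p(x) = x / (p x + 1 - p)`. -/
noncomputable def fScalar (p x : ℝ) : ℝ := x / (p * x + 1 - p)

/-- `f_p` applied to an operator via the continuous functional calculus. -/
noncomputable def fOp (p : ℝ) {H : Type*} [NormedAddCommGroup H] [InnerProductSpace ℂ H]
    [CompleteSpace H] (A : H →L[ℂ] H) : H →L[ℂ] H :=
  cfc (fun x : ℝ => x / (p * x + 1 - p)) A

lemma fScalar_eq_add_inv {p x : ℝ} (hp : p ≠ 0) (hx : p * x + (1 - p) ≠ 0) :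
    fScalar p x = 1 / p + (p - 1) / p * (p * x + (1 - p))⁻¹ := by
  rw [fScalar, add_sub_assoc, div_eq_iff hx, add_mul, mul_assoc, inv_mul_cancel₀ hx]
  field_simp
  ring

lemma affine_pos_of_mem_Ico {p x : ℝ} (hp : p < 0) (hx : x ∈ Set.Ico 0 (1 - 1 / p)) :
    0 < p * x + (1 - p) := by
  have h := mul_lt_mul_of_neg_left hx.2 hp
  rw [mul_sub, mul_one_div_cancel hp.ne] at h
  linarith

section SelfAdjoint

variable {A : Type*} [Ring A] [StarRing A] [TopologicalSpace A] [Algebra ℝ A]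
  [ContinuousFunctionalCalculus ℝ A IsSelfAdjoint]

lemma cfc_affine (c d : ℝ) (a : A) (ha : IsSelfAdjoint a := by cfc_tac) :
    cfc (fun x : ℝ => c * x + d) a = c • a + algebraMap ℝ A d := by
  rw [cfc_add_const d (c * ·) a, cfc_const_mul_id c a]

lemma cfc_fScalar_eq {p : ℝ} (hp : p < 0) (a : A) (ha : IsSelfAdjoint a)
    (ha_spec : spectrum ℝ a ⊆ Set.Ico 0 (1 - 1 / p)) :
    cfc (fScalar p) a =
      algebraMap ℝ A (1 / p) + ((p - 1) / p) • cfc (fun x : ℝ => (p * x + (1 - p))⁻¹) a := by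
  have hpos : ∀ x ∈ spectrum ℝ a, 0 < p * x + (1 - p) := fun x hx =>
    affine_pos_of_mem_Ico hp (ha_spec hx)
  have hcont : ContinuousOn (fun x : ℝ => (p * x + (1 - p))⁻¹) (spectrum ℝ a) :=
    (by fun_prop : Continuous fun x : ℝ => p * x + (1 - p)).continuousOn.inv₀
      fun x hx => (hpos x hx).ne'
  rw [cfc_congr fun x hx => fScalar_eq_add_inv hp.ne (hpos x hx).ne', cfc_const_add _ _ a,
    cfc_const_mul _ _ a]

end SelfAdjoint

section CStarAlgebra

variable {A : Type*} [CStarAlgebra A] [PartialOrder A] [StarOrderedRing A]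

lemma cfc_inv_affine_le_of_nonpos {c d : ℝ} (hc : c ≤ 0) {a b : A} (hab : a ≤ b)
    (ha : IsSelfAdjoint a) (hb : IsSelfAdjoint b)
    (ha_pos : ∀ x ∈ spectrum ℝ a, 0 < c * x + d) (hb_pos : ∀ x ∈ spectrum ℝ b, 0 < c * x + d) :
    cfc (fun x : ℝ => (c * x + d)⁻¹) a ≤ cfc (fun x : ℝ => (c * x + d)⁻¹) b := by
  rw [cfc_inv _ a fun x hx => (ha_pos x hx).ne', cfc_inv _ b fun x hx => (hb_pos x hx).ne']
  have hba : cfc (fun x : ℝ => c * x + d) b ≤ cfc (fun x : ℝ => c * x + d) a := by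
    rw [cfc_affine c d a, cfc_affine c d b]
    gcongr ?_ + _
    exact smul_le_smul_of_nonpos_left hab hc
  exact CStarAlgebra.ringInverse_le_ringInverse hba ((cfc_isStrictlyPositive_iff _ b).2 hb_pos)

theorem cfc_fScalar_le_of_le {p : ℝ} (hp : p < 0) {a b : A} (hab : a ≤ b)
    (ha : IsSelfAdjoint a) (hb : IsSelfAdjoint b)
    (ha_spec : spectrum ℝ a ⊆ Set.Ico 0 (1 - 1 / p))
    (hb_spec : spectrum ℝ b ⊆ Set.Ico 0 (1 - 1 / p)) :
    cfc (fScalar p) a ≤ cfc (fScalar p) b := by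
  rw [cfc_fScalar_eq hp a ha ha_spec, cfc_fScalar_eq hp b hb hb_spec]
  have hcoeff : 0 ≤ (p - 1) / p := div_nonneg_of_nonpos (by linarith) hp.le
  gcongr
  exact cfc_inv_affine_le_of_nonpos hp.le hab ha hb
    (fun x hx => affine_pos_of_mem_Ico hp (ha_spec hx))
    (fun x hx => affine_pos_of_mem_Ico hp (hb_spec hx))

end CStarAlgebra

theorem stmt_1 {H : Type*} [NormedAddCommGroup H] [InnerProductSpace ℂ H] [CompleteSpace H]
    (p : ℝ) (hp : p < 0) (A B : H →L[ℂ] H)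
    (hA : IsSelfAdjoint A) (hB : IsSelfAdjoint B)
    (hAspec : spectrum ℝ A ⊆ Set.Ico 0 (1 - 1 / p))
    (hBspec : spectrum ℝ B ⊆ Set.Ico 0 (1 - 1 / p))
    (hAB : A ≤ B) : fOp p A ≤ fOp p B :=
  cfc_fScalar_le_of_le hp hAB hA hB hAspec hBspec
end

section
/- For every real p < 1, the map A ↦ f_p(A) is a homeomorphism of the effect algebra [0, I] onto itself with respect to the operator norm topology. -/
/-!
On `[0, 1]` the Möbius map `f_p` is a continuous bijection with inverse `f_{p/(p-1)}`
(and `p ↦ p/(p-1)` is an involution preserving `p < 1`). Since the spectrum of an effect lies in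
`[0, 1]`, the continuous functional calculus carries these facts over to `[0, I]`: it preserves
`[0, I]`, turns composition of functions into composition of operators, and `cfc f` is
norm-continuous on operators whose spectra lie in a fixed compact set on which `f` is continuous.
-/

open Set

section Scalar

variable {p x : ℝ}

lemma fScalar_denom_pos (hp : p < 1) (hx : x ∈ Icc 0 1) : 0 < p * x + 1 - p := by
  nlinarith [mul_nonneg (sub_nonneg.2 hx.2) (sub_pos.2 hp).le, hx.1, hx.2]

lemma fScalar_mapsTo_Icc (hp : p < 1) : MapsTo (fScalar p) (Icc 0 1) (Icc 0 1) := fun x hx => by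
  have hD := fScalar_denom_pos hp hx
  refine ⟨div_nonneg hx.1 hD.le, (div_le_one hD).2 ?_⟩
  nlinarith [mul_nonneg (sub_nonneg.2 hx.2) (sub_nonneg.2 hp.le)]

lemma continuousOn_fScalar (hp : p < 1) : ContinuousOn (fScalar p) (Icc 0 1) :=
  continuousOn_id.div (by fun_prop) fun _ hx => (fScalar_denom_pos hp hx).ne'

lemma div_sub_one_lt_one (hp : p < 1) : p / (p - 1) < 1 := by
  rw [div_lt_one_of_neg (by linarith)]
  linarith

lemma div_div_sub_one_div_sub_one (hp : p ≠ 1) : p / (p - 1) / (p / (p - 1) - 1) = p := by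
  have : p - 1 ≠ 0 := sub_ne_zero.2 hp
  field_simp
  ring

lemma fScalar_leftInvOn (hp : p < 1) : LeftInvOn (fScalar (p / (p - 1))) (fScalar p) (Icc 0 1) :=
  fun x hx => by
    have hD := (fScalar_denom_pos hp hx).ne'
    have : p - 1 ≠ 0 := by linarith
    have hdenom : p / (p - 1) * (x / (p * x + 1 - p)) + 1 - p / (p - 1) = 1 / (p * x + 1 - p) := by
      field_simp
      ring
    simp only [fScalar]
    rw [hdenom, div_div_div_cancel_right₀ hD, div_one]

lemma fScalar_invOn (hp : p < 1) :
    InvOn (fScalar (p / (p - 1))) (fScalar p) (Icc 0 1) (Icc 0 1) := by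
  refine ⟨fScalar_leftInvOn hp, ?_⟩
  simpa only [div_div_sub_one_div_sub_one hp.ne] using fScalar_leftInvOn (div_sub_one_lt_one hp)

end Scalar

section CStarAlgebra

variable {A : Type*} [CStarAlgebra A] [PartialOrder A] [StarOrderedRing A] {f g : ℝ → ℝ}

lemma spectrum_subset_Icc_of_mem_Icc {a : A} (ha : a ∈ Icc 0 1) : spectrum ℝ a ⊆ Icc 0 1 :=
  fun x hx => ⟨spectrum_nonneg_of_nonneg ha.1 hx,
    (CFC.le_one_iff a (IsSelfAdjoint.of_nonneg ha.1)).1 ha.2 x hx⟩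

lemma cfc_mapsTo_Icc (hf : MapsTo f (Icc 0 1) (Icc 0 1)) :
    MapsTo (cfc f : A → A) (Icc 0 1) (Icc 0 1) := fun a ha =>
  have hspec := spectrum_subset_Icc_of_mem_Icc ha
  ⟨cfc_nonneg fun _ hx => (hf (hspec hx)).1, cfc_le_one f a fun _ hx => (hf (hspec hx)).2⟩

lemma cfc_leftInvOn_Icc (hf : ContinuousOn f (Icc 0 1)) (hg : ContinuousOn g (Icc 0 1))
    (hfI : MapsTo f (Icc 0 1) (Icc 0 1)) (hgf : LeftInvOn g f (Icc 0 1)) :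
    LeftInvOn (cfc g : A → A) (cfc f) (Icc 0 1) := fun a ha => by
  have hspec := spectrum_subset_Icc_of_mem_Icc ha
  rw [← cfc_comp g f a (IsSelfAdjoint.of_nonneg ha.1)
    (hg.mono (hfI.mono_left hspec).image_subset) (hf.mono hspec),
    cfc_congr (f := g ∘ f) (g := id) (hgf.mono hspec)]
  exact cfc_id ℝ a (IsSelfAdjoint.of_nonneg ha.1)

lemma cfc_invOn_Icc (hf : ContinuousOn f (Icc 0 1)) (hg : ContinuousOn g (Icc 0 1))
    (hfI : MapsTo f (Icc 0 1) (Icc 0 1)) (hgI : MapsTo g (Icc 0 1) (Icc 0 1))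
    (hfg : InvOn g f (Icc 0 1) (Icc 0 1)) :
    InvOn (cfc g : A → A) (cfc f) (Icc 0 1) (Icc 0 1) :=
  ⟨cfc_leftInvOn_Icc hf hg hfI hfg.1, cfc_leftInvOn_Icc hg hf hgI hfg.2⟩

lemma continuousOn_cfc_Icc (hf : ContinuousOn f (Icc 0 1)) :
    ContinuousOn (cfc f : A → A) (Icc 0 1) :=
  continuousOn_id.cfc' isCompact_Icc f (fun _ ha => spectrum_subset_Icc_of_mem_Icc ha)
    (fun _ ha => IsSelfAdjoint.of_nonneg ha.1) hf

end CStarAlgebra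

lemma fOp_eq_cfc (p : ℝ) {H : Type*} [NormedAddCommGroup H] [InnerProductSpace ℂ H]
    [CompleteSpace H] : (fOp p : (H →L[ℂ] H) → H →L[ℂ] H) = cfc (fScalar p) :=
  rfl

/-- For `p < 1`, `A ↦ f_p(A)` is a homeomorphism of the effect algebra `[0, I]` onto
itself: it maps `[0, I]` bijectively onto itself, is continuous on `[0, I]`, and its
inverse `f_{p/(p-1)}` is continuous on `[0, I]`. -/
theorem stmt_10 {H : Type*} [NormedAddCommGroup H] [InnerProductSpace ℂ H] [CompleteSpace H]
    (p : ℝ) (hp : p < 1) :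
    Set.BijOn (fOp p) {A : H →L[ℂ] H | IsSelfAdjoint A ∧ 0 ≤ A ∧ A ≤ 1} {A : H →L[ℂ] H | IsSelfAdjoint A ∧ 0 ≤ A ∧ A ≤ 1} ∧
    ContinuousOn (fOp p) {A : H →L[ℂ] H | IsSelfAdjoint A ∧ 0 ≤ A ∧ A ≤ 1} ∧
    ContinuousOn (fOp (p / (p - 1))) {A : H →L[ℂ] H | IsSelfAdjoint A ∧ 0 ≤ A ∧ A ≤ 1} ∧
    ∀ A ∈ {A : H →L[ℂ] H | IsSelfAdjoint A ∧ 0 ≤ A ∧ A ≤ 1}, fOp (p / (p - 1)) (fOp p A) = A := by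
  have hq := div_sub_one_lt_one hp
  have hE : {A : H →L[ℂ] H | IsSelfAdjoint A ∧ 0 ≤ A ∧ A ≤ 1} = Icc 0 1 :=
    ext fun A => and_iff_right_of_imp fun hA => IsSelfAdjoint.of_nonneg hA.1
  have hinv : InvOn (cfc (fScalar (p / (p - 1)))) (cfc (fScalar p)) (Icc (0 : H →L[ℂ] H) 1)
      (Icc 0 1) :=
    cfc_invOn_Icc (continuousOn_fScalar hp) (continuousOn_fScalar hq) (fScalar_mapsTo_Icc hp)
      (fScalar_mapsTo_Icc hq) (fScalar_invOn hp)
  rw [hE, fOp_eq_cfc, fOp_eq_cfc]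
  exact ⟨hinv.bijOn (cfc_mapsTo_Icc (fScalar_mapsTo_Icc hp))
      (cfc_mapsTo_Icc (fScalar_mapsTo_Icc hq)),
    continuousOn_cfc_Icc (continuousOn_fScalar hp), continuousOn_cfc_Icc (continuousOn_fScalar hq),
    hinv.1⟩
end

section
/- If φ : [0, I] → [0, I] is an order automorphism of the effect algebra, then φ maps the set (0, I] = {A : 0 < A ≤ I, A invertible} onto itself. -/
/-!
An effect `A` is invertible exactly when it has a nonzero common lower bound with every nonzero
effect, a purely order-theoretic property; an order automorphism of the effects fixes their least
element `0` and therefore preserves it.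

If `r ≤ A` with `r > 0`, then `min r 1 • B` lies below both `A` and `B`. If `A` is not invertible,
neither is `√A`, and being self-adjoint it is not surjective; take `y ∉ range √A` and let `P` be
the projection onto `ℂ ∙ y`. Douglas' range inclusion (`C ≤ A → range √C ⊆ range √A`, from
Hahn–Banach and the Riesz representation) shows that any effect `C ≤ A, P` has
`range √C ⊆ range √A ⊓ (ℂ ∙ y) = ⊥`, so `C = 0`.
-/

open Set ContinuousLinearMap InnerProductSpace
open scoped InnerProduct

section OrderAutomorphism

variable {α : Type*}

def MeetsAll [LE α] (T : Set α) (a : α) : Prop := ∀ b ∈ T, ∃ c ∈ T, c ≤ a ∧ c ≤ b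

variable {S T : Set α} {φ : α → α}

theorem meetsAll_apply_iff [LE α] (hT : BijOn φ T T) (hTS : T ⊆ S)
    (hord : ∀ a ∈ S, ∀ b ∈ S, a ≤ b ↔ φ a ≤ φ b) {a : α} (ha : a ∈ S) :
    MeetsAll T (φ a) ↔ MeetsAll T a := by
  calc MeetsAll T (φ a) ↔ ∀ b ∈ T, ∃ c ∈ T, φ c ≤ φ a ∧ φ c ≤ φ b := by
        rw [MeetsAll, hT.forall]
        exact forall₂_congr fun b _ => hT.exists
    _ ↔ MeetsAll T a :=
        forall₂_congr fun b hb => exists_congr fun c => and_congr_right fun hc => by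
          rw [hord c (hTS hc) a ha, hord c (hTS hc) b (hTS hb)]

theorem Set.BijOn.image_sep_of_iff (h : BijOn φ S S) {p : α → Prop}
    (hp : ∀ a ∈ S, p (φ a) ↔ p a) : φ '' {a ∈ S | p a} = {a ∈ S | p a} := by
  ext b
  constructor
  · rintro ⟨a, ⟨ha, hpa⟩, rfl⟩
    exact ⟨h.mapsTo ha, (hp a ha).2 hpa⟩
  · rintro ⟨hb, hpb⟩
    obtain ⟨a, ha, rfl⟩ := h.surjOn hb
    exact ⟨a, ⟨ha, (hp a ha).1 hpb⟩, rfl⟩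

theorem Set.BijOn.apply_eq_of_isLeast [PartialOrder α] (h : BijOn φ S S)
    (hord : ∀ a ∈ S, ∀ b ∈ S, a ≤ b ↔ φ a ≤ φ b) {z : α} (hz : IsLeast S z) : φ z = z := by
  obtain ⟨a, ha, haz⟩ := h.surjOn hz.1
  refine le_antisymm ?_ (hz.2 (h.mapsTo hz.1))
  calc φ z ≤ φ a := (hord z hz.1 a ha).1 (hz.2 ha)
    _ = z := haz

end OrderAutomorphism

theorem IsStrictlyPositive.meetsAll {A : Type*} [CStarAlgebra A] [PartialOrder A]
    [StarOrderedRing A] {a : A} (ha : IsStrictlyPositive a) : MeetsAll (Icc 0 1 \ {0}) a := by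
  rintro b ⟨⟨hb₀, hb₁⟩, hb⟩
  have : Nontrivial A := ⟨⟨b, 0, hb⟩⟩
  obtain ⟨r, hr, hra⟩ := (CFC.exists_pos_algebraMap_le_iff ha.isSelfAdjoint).2
    fun x hx => ha.spectrum_pos hx
  set s := min r 1
  have hs : 0 < s := lt_min hr one_pos
  have hsb : s • b ≤ b := by
    simpa using smul_le_smul_of_nonneg_right (min_le_right r 1) hb₀
  refine ⟨s • b, ⟨⟨smul_nonneg hs.le hb₀, hsb.trans hb₁⟩, ?_⟩, ?_, hsb⟩
  · simpa [hs.ne'] using hb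
  · calc s • b ≤ s • (1 : A) := smul_le_smul_of_nonneg_left hb₁ hs.le
      _ ≤ r • (1 : A) := smul_le_smul_of_nonneg_right (min_le_left r 1) zero_le_one
      _ ≤ a := by simpa [Algebra.algebraMap_eq_smul_one] using hra

theorem ContinuousLinearMap.mem_range_adjoint_of_norm_inner_le {𝕜 E F : Type*} [RCLike 𝕜]
    [NormedAddCommGroup E] [InnerProductSpace 𝕜 E] [CompleteSpace E]
    [NormedAddCommGroup F] [InnerProductSpace 𝕜 F] [CompleteSpace F]
    (T : E →L[𝕜] F) {y : E} {M : ℝ} (h : ∀ x, ‖⟪y, x⟫_𝕜‖ ≤ M * ‖T x‖) : y ∈ (T†).range := by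
  have hker : LinearMap.ker (T : E →ₗ[𝕜] F) ≤ LinearMap.ker (innerₛₗ 𝕜 y) := fun x hx => by
    simpa [show T x = 0 from hx] using h x
  let f : LinearMap.range (T : E →ₗ[𝕜] F) →ₗ[𝕜] 𝕜 :=
    (LinearMap.ker (T : E →ₗ[𝕜] F)).liftQ (innerₛₗ 𝕜 y) hker ∘ₗ
      (T : E →ₗ[𝕜] F).quotKerEquivRange.symm
  have hf : ∀ x, f ⟨(T : E →ₗ[𝕜] F) x, LinearMap.mem_range_self _ x⟩ = ⟪y, x⟫_𝕜 := fun x => by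
    rw [LinearMap.comp_apply, LinearEquiv.coe_coe, LinearMap.quotKerEquivRange_symm_apply_image]
    rfl
  let fc : StrongDual 𝕜 (LinearMap.range (T : E →ₗ[𝕜] F)) :=
    f.mkContinuous M fun ⟨_, x, rfl⟩ => by rw [hf]; exact h x
  obtain ⟨g, hg, -⟩ := exists_extension_norm_eq _ fc
  refine ⟨(toDual 𝕜 F).symm g, ext_inner_right 𝕜 fun x => ?_⟩
  rw [coe_coe, adjoint_inner_left, toDual_symm_apply]
  exact (hg ⟨T x, LinearMap.mem_range_self _ x⟩).trans (hf x)

section Effect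

variable {H : Type*} [NormedAddCommGroup H] [InnerProductSpace ℂ H] [CompleteSpace H]

theorem IsSelfAdjoint.isUnit_of_surjective {S : H →L[ℂ] H} (hS : IsSelfAdjoint S)
    (hsurj : Function.Surjective S) : IsUnit S := by
  refine isUnit_iff_bijective.2 ⟨LinearMap.ker_eq_bot.1 ?_, hsurj⟩
  rw [← hS.adjoint_eq, ← orthogonal_range, LinearMap.range_eq_top.2 hsurj,
    Submodule.top_orthogonal_eq_bot]

theorem norm_sqrt_apply_sq {A : H →L[ℂ] H} (hA : 0 ≤ A) (x : H) :
    ‖CFC.sqrt A x‖ ^ 2 = RCLike.re ⟪A x, x⟫_ℂ := by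
  rw [apply_norm_sq_eq_inner_adjoint_left, (CFC.sqrt_nonneg A).isSelfAdjoint.adjoint_eq,
    ← mul_def, CFC.sqrt_mul_sqrt_self A hA]

theorem norm_sqrt_apply_le_of_le {A C : H →L[ℂ] H} (hC : 0 ≤ C) (hCA : C ≤ A) (x : H) :
    ‖CFC.sqrt C x‖ ≤ ‖CFC.sqrt A x‖ := by
  have hsub := ((le_def C A).1 hCA).re_inner_nonneg_left x
  rw [sub_apply, inner_sub_left, map_sub, sub_nonneg] at hsub
  rwa [← pow_le_pow_iff_left₀ (norm_nonneg _) (norm_nonneg _) two_ne_zero,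
    norm_sqrt_apply_sq hC, norm_sqrt_apply_sq (hC.trans hCA)]

theorem range_sqrt_le_of_le {A C : H →L[ℂ] H} (hC : 0 ≤ C) (hCA : C ≤ A) :
    (CFC.sqrt C).range ≤ (CFC.sqrt A).range := by
  rintro _ ⟨u, rfl⟩
  rw [← (CFC.sqrt_nonneg A).isSelfAdjoint.adjoint_eq]
  refine (CFC.sqrt A).mem_range_adjoint_of_norm_inner_le (M := ‖u‖) fun x => ?_
  calc ‖⟪CFC.sqrt C u, x⟫_ℂ‖ = ‖⟪u, CFC.sqrt C x⟫_ℂ‖ := by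
        rw [← adjoint_inner_left, (CFC.sqrt_nonneg C).isSelfAdjoint.adjoint_eq]
    _ ≤ ‖u‖ * ‖CFC.sqrt C x‖ := norm_inner_le_norm _ _
    _ ≤ ‖u‖ * ‖CFC.sqrt A x‖ := by gcongr; exact norm_sqrt_apply_le_of_le hC hCA x

theorem IsStarProjection.range_sqrt_le_range {C P : H →L[ℂ] H} (hP : IsStarProjection P)
    (hC : 0 ≤ C) (hCP : C ≤ P) : (CFC.sqrt C).range ≤ P.range := by
  have hsqrt : CFC.sqrt P = P := CFC.sqrt_unique hP.isIdempotentElem.eq hP.nonneg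
  simpa [hsqrt] using range_sqrt_le_of_le hC hCP

theorem exists_notMem_range_sqrt {A : H →L[ℂ] H} (hA : 0 ≤ A) (hA' : ¬IsUnit A) :
    ∃ y, y ∉ (CFC.sqrt A).range := by
  by_contra! h
  exact hA' <| (CFC.isUnit_sqrt_iff A hA).1 <|
    (CFC.sqrt_nonneg A).isSelfAdjoint.isUnit_of_surjective fun y => h y

theorem isUnit_iff_meetsAll {A : H →L[ℂ] H} (hA : A ∈ Icc 0 1) :
    IsUnit A ↔ MeetsAll (Icc 0 1 \ {0}) A := by
  refine ⟨fun hU => (hU.isStrictlyPositive hA.1).meetsAll, fun hmeet => ?_⟩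
  by_contra hU
  obtain ⟨y, hy⟩ := exists_notMem_range_sqrt hA.1 hU
  have hy0 : y ≠ 0 := by rintro rfl; exact hy (Submodule.zero_mem _)
  set P := (ℂ ∙ y).starProjection
  have hP : IsStarProjection P := isStarProjection_starProjection
  have hPy : P y = y :=
    Submodule.starProjection_eq_self_iff.2 (Submodule.mem_span_singleton_self y)
  have hPmem : P ∈ Icc 0 1 \ {0} := by
    refine ⟨⟨hP.nonneg, sub_nonneg.1 (isStarProjection_one_sub_iff.2 hP).nonneg⟩, fun h0 => ?_⟩
    rw [mem_singleton_iff.1 h0, zero_apply] at hPy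
    exact hy0 hPy.symm
  obtain ⟨C, ⟨⟨hC0, -⟩, hCne⟩, hCA, hCP⟩ := hmeet P hPmem
  have hrange : (CFC.sqrt C).range = ⊥ := by
    refine eq_bot_iff.2 (Submodule.disjoint_span_singleton_of_notMem hy
      (range_sqrt_le_of_le hC0 hCA) ?_)
    simpa [P] using hP.range_sqrt_le_range hC0 hCP
  rw [LinearMap.range_eq_bot, ← toLinearMap_zero, coe_inj, CFC.sqrt_eq_zero_iff C hC0] at hrange
  exact hCne hrange

end Effect

theorem stmt_11_general {H : Type*} [NormedAddCommGroup H] [InnerProductSpace ℂ H] [CompleteSpace H]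
    (φ : (H →L[ℂ] H) → (H →L[ℂ] H))
    (hbij : Set.BijOn φ {A : H →L[ℂ] H | IsSelfAdjoint A ∧ 0 ≤ A ∧ A ≤ 1} {A : H →L[ℂ] H | IsSelfAdjoint A ∧ 0 ≤ A ∧ A ≤ 1})
    (hord : ∀ A ∈ {A : H →L[ℂ] H | IsSelfAdjoint A ∧ 0 ≤ A ∧ A ≤ 1}, ∀ B ∈ {A : H →L[ℂ] H | IsSelfAdjoint A ∧ 0 ≤ A ∧ A ≤ 1}, (A ≤ B ↔ φ A ≤ φ B)) :
    φ '' {A : H →L[ℂ] H | IsSelfAdjoint A ∧ 0 ≤ A ∧ A ≤ 1 ∧ IsUnit A} =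
      {A : H →L[ℂ] H | IsSelfAdjoint A ∧ 0 ≤ A ∧ A ≤ 1 ∧ IsUnit A} := by
  have hE : {A : H →L[ℂ] H | IsSelfAdjoint A ∧ 0 ≤ A ∧ A ≤ 1} = Icc 0 1 :=
    ext fun A => ⟨fun h => h.2, fun h => ⟨.of_nonneg h.1, h⟩⟩
  have hU : {A : H →L[ℂ] H | IsSelfAdjoint A ∧ 0 ≤ A ∧ A ≤ 1 ∧ IsUnit A} =
      {A ∈ Icc 0 1 | MeetsAll (Icc 0 1 \ {0}) A} :=
    ext fun A => ⟨fun ⟨_, h0, h1, hA⟩ => ⟨⟨h0, h1⟩, (isUnit_iff_meetsAll ⟨h0, h1⟩).1 hA⟩,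
      fun ⟨hA, hm⟩ => ⟨.of_nonneg hA.1, hA.1, hA.2, (isUnit_iff_meetsAll hA).2 hm⟩⟩
  rw [hE] at hbij hord
  have hnonzero := hbij.sdiff_singleton (left_mem_Icc.2 zero_le_one)
  rw [hbij.apply_eq_of_isLeast hord (isLeast_Icc zero_le_one)] at hnonzero
  rw [hU]
  exact hbij.image_sep_of_iff fun A hA => meetsAll_apply_iff hnonzero sdiff_subset hord hA

theorem stmt_11 {H : Type*} [NormedAddCommGroup H] [InnerProductSpace ℂ H] [CompleteSpace H]
    (hdim : 2 ≤ Module.rank ℂ H)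
    (φ : (H →L[ℂ] H) → (H →L[ℂ] H))
    (hbij : Set.BijOn φ {A : H →L[ℂ] H | IsSelfAdjoint A ∧ 0 ≤ A ∧ A ≤ 1} {A : H →L[ℂ] H | IsSelfAdjoint A ∧ 0 ≤ A ∧ A ≤ 1})
    (hord : ∀ A ∈ {A : H →L[ℂ] H | IsSelfAdjoint A ∧ 0 ≤ A ∧ A ≤ 1}, ∀ B ∈ {A : H →L[ℂ] H | IsSelfAdjoint A ∧ 0 ≤ A ∧ A ≤ 1}, (A ≤ B ↔ φ A ≤ φ B)) :
    φ '' {A : H →L[ℂ] H | IsSelfAdjoint A ∧ 0 ≤ A ∧ A ≤ 1 ∧ IsUnit A} =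
      {A : H →L[ℂ] H | IsSelfAdjoint A ∧ 0 ≤ A ∧ A ≤ 1 ∧ IsUnit A} :=
  stmt_11_general φ hbij hord
end

section
/- The map A ↦ A⁻¹ − I is an order anti-isomorphism from the operator interval (0, I] onto [0, ∞), with inverse A ↦ (I + A)⁻¹; i.e., it is a bijection and A ≤ B ⟺ B⁻¹ − I ≤ A⁻¹ − I. -/
/-! Inversion is operator antitone on positive invertible elements of a unital C⋆-algebra, so an
invertible `0 ≤ a` satisfies `a ≤ 1` iff `1 ≤ a⁻¹`, and `1 + b` is invertible with inverse in
`(0, 1]` whenever `0 ≤ b`. That the two maps are mutually inverse is ring algebra. -/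

open scoped Ring in
lemma Ring.inverse_one_add_inverse_sub_one {R : Type*} [Ring R] {a : R} (ha : IsUnit a) :
    (1 + (a⁻¹ʳ - 1))⁻¹ʳ = a := by
  rw [add_sub_cancel, Ring.inverse_inverse ha]

namespace CStarAlgebra

open scoped Ring

variable {A : Type*} [CStarAlgebra A] [PartialOrder A] [StarOrderedRing A]

lemma isUnit_one_add {b : A} (hb : 0 ≤ b) : IsUnit (1 + b) :=
  isUnit_of_le 1 (le_add_of_nonneg_right hb)

lemma ringInverse_nonneg {a : A} (ha : 0 ≤ a) : 0 ≤ a⁻¹ʳ := by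
  by_cases hu : IsUnit a
  · lift a to Aˣ using hu
    rw [Ring.inverse_unit]
    exact CFC.inv_nonneg_of_nonneg a ha
  · rw [Ring.inverse_non_unit a hu]

lemma ringInverse_le_one {a : A} (ha : 1 ≤ a) : a⁻¹ʳ ≤ 1 := by
  lift a to Aˣ using isUnit_of_le 1 ha
  rw [Ring.inverse_unit]
  exact inv_le_one ha

lemma one_le_ringInverse_iff {a : A} (ha₀ : 0 ≤ a) (ha : IsUnit a) : 1 ≤ a⁻¹ʳ ↔ a ≤ 1 := by
  lift a to Aˣ using ha
  rw [Ring.inverse_unit]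
  exact one_le_inv_iff_le_one ha₀

lemma ringInverse_le_ringInverse_iff {a b : A} (ha₀ : 0 ≤ a) (ha : IsUnit a) (hb₀ : 0 ≤ b)
    (hb : IsUnit b) : a⁻¹ʳ ≤ b⁻¹ʳ ↔ b ≤ a := by
  lift a to Aˣ using ha
  lift b to Aˣ using hb
  rw [Ring.inverse_unit, Ring.inverse_unit]
  exact CStarAlgebra.inv_le_inv_iff ha₀ hb₀

lemma ringInverse_sub_one_nonneg {a : A} (ha₀ : 0 ≤ a) (ha : IsUnit a) (ha₁ : a ≤ 1) :
    0 ≤ a⁻¹ʳ - 1 :=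
  sub_nonneg.mpr ((one_le_ringInverse_iff ha₀ ha).mpr ha₁)

lemma ringInverse_ringInverse_one_add_sub_one {b : A} (hb : 0 ≤ b) :
    (1 + b)⁻¹ʳ⁻¹ʳ - 1 = b := by
  rw [Ring.inverse_inverse (isUnit_one_add hb), add_sub_cancel_left]

lemma ringInverse_sub_one_le_iff {a b : A} (ha₀ : 0 ≤ a) (ha : IsUnit a) (hb₀ : 0 ≤ b)
    (hb : IsUnit b) : b⁻¹ʳ - 1 ≤ a⁻¹ʳ - 1 ↔ a ≤ b := by
  rw [sub_le_sub_iff_right, ringInverse_le_ringInverse_iff hb₀ hb ha₀ ha]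

lemma mapsTo_ringInverse_sub_one :
    Set.MapsTo (fun a : A ↦ a⁻¹ʳ - 1)
      {a | IsSelfAdjoint a ∧ 0 ≤ a ∧ a ≤ 1 ∧ IsUnit a} {b | IsSelfAdjoint b ∧ 0 ≤ b} :=
  fun _ ⟨_, ha₀, ha₁, ha⟩ ↦
    have hb₀ := ringInverse_sub_one_nonneg ha₀ ha ha₁
    ⟨.of_nonneg hb₀, hb₀⟩

lemma mapsTo_ringInverse_one_add :
    Set.MapsTo (fun b : A ↦ (1 + b)⁻¹ʳ)
      {b | IsSelfAdjoint b ∧ 0 ≤ b} {a | IsSelfAdjoint a ∧ 0 ≤ a ∧ a ≤ 1 ∧ IsUnit a} :=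
  fun _ ⟨_, hb₀⟩ ↦
    have ha₀ := ringInverse_nonneg (add_nonneg zero_le_one hb₀)
    ⟨.of_nonneg ha₀, ha₀, ringInverse_le_one (le_add_of_nonneg_right hb₀),
      (isUnit_one_add hb₀).ringInverse⟩

end CStarAlgebra

open CStarAlgebra in
/-- `A ↦ A⁻¹ − I` is an order anti-isomorphism from `(0, I]` onto `[0, ∞)` with inverse
`A ↦ (I + A)⁻¹`: it is a bijection, the two maps are mutually inverse, and
`A ≤ B ↔ B⁻¹ − I ≤ A⁻¹ − I`. -/
theorem stmt_12 {H : Type*} [NormedAddCommGroup H] [InnerProductSpace ℂ H] [CompleteSpace H] :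
    Set.BijOn (fun A : H →L[ℂ] H => Ring.inverse A - 1)
      {A : H →L[ℂ] H | IsSelfAdjoint A ∧ 0 ≤ A ∧ A ≤ 1 ∧ IsUnit A}
      {A : H →L[ℂ] H | IsSelfAdjoint A ∧ 0 ≤ A} ∧
    (∀ A ∈ {A : H →L[ℂ] H | IsSelfAdjoint A ∧ 0 ≤ A ∧ A ≤ 1 ∧ IsUnit A},
      Ring.inverse (1 + (Ring.inverse A - 1)) = A) ∧
    (∀ A ∈ {A : H →L[ℂ] H | IsSelfAdjoint A ∧ 0 ≤ A},
      Ring.inverse (Ring.inverse (1 + A)) - 1 = A) ∧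
    (∀ A ∈ {A : H →L[ℂ] H | IsSelfAdjoint A ∧ 0 ≤ A ∧ A ≤ 1 ∧ IsUnit A},
      ∀ B ∈ {A : H →L[ℂ] H | IsSelfAdjoint A ∧ 0 ≤ A ∧ A ≤ 1 ∧ IsUnit A},
        (A ≤ B ↔ Ring.inverse B - 1 ≤ Ring.inverse A - 1)) := by
  have left_inv : ∀ A ∈ {A : H →L[ℂ] H | IsSelfAdjoint A ∧ 0 ≤ A ∧ A ≤ 1 ∧ IsUnit A},
      Ring.inverse (1 + (Ring.inverse A - 1)) = A :=
    fun _ ⟨_, _, _, hA⟩ ↦ Ring.inverse_one_add_inverse_sub_one hA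
  have right_inv : ∀ A ∈ {A : H →L[ℂ] H | IsSelfAdjoint A ∧ 0 ≤ A},
      Ring.inverse (Ring.inverse (1 + A)) - 1 = A :=
    fun _ ⟨_, hB₀⟩ ↦ ringInverse_ringInverse_one_add_sub_one hB₀
  refine ⟨Set.InvOn.bijOn (f' := fun B ↦ Ring.inverse (1 + B)) ⟨left_inv, right_inv⟩
    mapsTo_ringInverse_sub_one mapsTo_ringInverse_one_add, left_inv, right_inv, ?_⟩
  exact fun _ ⟨_, hA₀, _, hA⟩ _ ⟨_, hB₀, _, hB⟩ ↦ (ringInverse_sub_one_le_iff hA₀ hA hB₀ hB).symm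
end

section
/- For an invertible bounded linear operator T on a complex Hilbert space, the map A ↦ I − (I + T A T*)⁻¹ is an order isomorphism from the effect algebra [0, I] onto the operator interval [0, (I + (T T*)⁻¹)⁻¹]. -/
/-!
Conjugation `a ↦ t a t*` by an invertible `t` is an order automorphism and `x ↦ 1 - x⁻¹` is an
order embedding of the strictly positive elements, so `Φ a = 1 - (1 + t a t*)⁻¹` is an order
embedding of the positive cone, mapping `[0, 1]` into `[Φ 0, Φ 1] = [0, Φ 1]`. It is onto: for `c`
in that interval, `1 - c ≥ 1 - Φ 1 = (1 + t t*)⁻¹` is invertible, and `Φ a = c` is solved by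
`a = t⁻¹ ((1 - c)⁻¹ - 1) t*⁻¹`. Finally `Φ 1 = (1 + (t t*)⁻¹)⁻¹` is a ring identity.
-/

open Set
open scoped Ring

section Ring

variable {R : Type*} [Ring R]

lemma Ring.inverse_one_add_inverse {s : R} (hs : IsUnit s) (hs' : IsUnit (1 + s)) :
    (1 + s⁻¹ʳ)⁻¹ʳ = 1 - (1 + s)⁻¹ʳ := by
  obtain ⟨s, rfl⟩ := hs
  obtain ⟨u, hu⟩ := hs'
  have hsu : (1 : R) + ↑s⁻¹ = ↑(s⁻¹ * u) := by
    rw [Units.val_mul, hu, mul_add, mul_one, Units.inv_mul, add_comm]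
  have hs_eq : (s : R) = u - 1 := by rw [hu, add_sub_cancel_left]
  rw [Ring.inverse_unit, hsu, Ring.inverse_unit, ← hu, Ring.inverse_unit, mul_inv_rev, inv_inv,
    Units.val_mul, hs_eq, mul_sub, Units.inv_mul, mul_one]

variable [StarRing R]

lemma IsUnit.mul_inverse_conjugate_mul {t : R} (ht : IsUnit t) (x : R) :
    t * (t⁻¹ʳ * x * star t⁻¹ʳ) * star t = x := by
  calc t * (t⁻¹ʳ * x * star t⁻¹ʳ) * star t = t * t⁻¹ʳ * x * star (t * t⁻¹ʳ) := by
        simp only [star_mul, mul_assoc]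
    _ = x := by rw [Ring.mul_inverse_cancel t ht, star_one, one_mul, mul_one]

noncomputable def effectMap (t a : R) : R := 1 - (1 + t * a * star t)⁻¹ʳ

lemma effectMap_zero {t : R} : effectMap t 0 = 0 := by
  simp [effectMap]

lemma effectMap_inverse_conjugate {t c : R} (ht : IsUnit t) (hc : IsUnit (1 - c)) :
    effectMap t (t⁻¹ʳ * ((1 - c)⁻¹ʳ - 1) * star t⁻¹ʳ) = c := by
  rw [effectMap, ht.mul_inverse_conjugate_mul, add_sub_cancel, Ring.inverse_inverse hc,
    sub_sub_cancel]

variable [PartialOrder R] [StarOrderedRing R]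

lemma IsUnit.star_right_conjugate_le_conjugate_iff {t a b : R} (ht : IsUnit t) :
    t * a * star t ≤ t * b * star t ↔ a ≤ b := by
  rw [← sub_nonneg, ← sub_mul, ← mul_sub, ht.star_right_conjugate_nonneg_iff, sub_nonneg]

lemma setOf_isSelfAdjoint_and_mem_Icc (b : R) :
    {c : R | IsSelfAdjoint c ∧ 0 ≤ c ∧ c ≤ b} = Icc 0 b := by
  ext c
  exact ⟨fun h => ⟨h.2.1, h.2.2⟩, fun h => ⟨.of_nonneg h.1, h.1, h.2⟩⟩

end Ring

section CStarAlgebra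

variable {A : Type*} [CStarAlgebra A] [PartialOrder A] [StarOrderedRing A]

lemma ringInverse_le_ringInverse_iff {a b : A} (ha : IsStrictlyPositive a)
    (hb : IsStrictlyPositive b) : b⁻¹ʳ ≤ a⁻¹ʳ ↔ a ≤ b := by
  refine ⟨fun h => ?_, fun h => CStarAlgebra.ringInverse_le_ringInverse h ha⟩
  simpa only [Ring.inverse_inverse ha.isUnit, Ring.inverse_inverse hb.isUnit] using
    CStarAlgebra.ringInverse_le_ringInverse h hb.ringInverse

lemma isStrictlyPositive_one_add_conjugate {a : A} (ha : 0 ≤ a) (t : A) :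
    IsStrictlyPositive (1 + t * a * star t) :=
  isStrictlyPositive_one.add_nonneg (star_right_conjugate_nonneg ha t)

variable {t : A}

lemma effectMap_one (ht : IsUnit t) : effectMap t 1 = (1 + (t * star t)⁻¹ʳ)⁻¹ʳ := by
  rw [effectMap, mul_one, Ring.inverse_one_add_inverse (ht.mul ht.star)
    (isStrictlyPositive_one.add_nonneg (mul_star_self_nonneg t)).isUnit]

lemma effectMap_le_effectMap_iff (ht : IsUnit t) {a b : A} (ha : 0 ≤ a) (hb : 0 ≤ b) :
    effectMap t a ≤ effectMap t b ↔ a ≤ b := by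
  rw [effectMap, effectMap, sub_le_sub_iff_left,
    ringInverse_le_ringInverse_iff (isStrictlyPositive_one_add_conjugate ha t)
      (isStrictlyPositive_one_add_conjugate hb t),
    add_le_add_iff_left, ht.star_right_conjugate_le_conjugate_iff]

lemma surjOn_effectMap (ht : IsUnit t) :
    SurjOn (effectMap t) (Icc 0 1) (Icc 0 (effectMap t 1)) := by
  rintro c ⟨hc0, hc1⟩
  have hc_pos : IsStrictlyPositive (1 - c) := by
    refine (isStrictlyPositive_one_add_conjugate zero_le_one t).ringInverse.of_le ?_
    simpa only [effectMap, sub_sub_cancel] using sub_le_sub_left hc1 1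
  have hc_inv : 1 ≤ (1 - c)⁻¹ʳ := by
    simpa only [Ring.inverse_one] using
      CStarAlgebra.ringInverse_le_ringInverse (sub_le_self 1 hc0) hc_pos
  have ha0 : 0 ≤ t⁻¹ʳ * ((1 - c)⁻¹ʳ - 1) * star t⁻¹ʳ :=
    star_right_conjugate_nonneg (sub_nonneg.2 hc_inv) _
  have hca := effectMap_inverse_conjugate ht hc_pos.isUnit
  refine ⟨_, ⟨ha0, ?_⟩, hca⟩
  rwa [← effectMap_le_effectMap_iff ht ha0 zero_le_one, hca]

theorem bijOn_effectMap (ht : IsUnit t) :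
    BijOn (effectMap t) (Icc 0 1) (Icc 0 (effectMap t 1)) := by
  refine ⟨?_, ?_, surjOn_effectMap ht⟩
  · rintro a ⟨ha0, ha1⟩
    refine ⟨?_, (effectMap_le_effectMap_iff ht ha0 zero_le_one).2 ha1⟩
    simpa only [effectMap_zero] using (effectMap_le_effectMap_iff ht le_rfl ha0).2 ha0
  · intro a ha b hb hab
    exact le_antisymm ((effectMap_le_effectMap_iff ht ha.1 hb.1).1 hab.le)
      ((effectMap_le_effectMap_iff ht hb.1 ha.1).1 hab.ge)

end CStarAlgebra

theorem stmt_13 {H : Type*} [NormedAddCommGroup H] [InnerProductSpace ℂ H] [CompleteSpace H]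
    (T : H →L[ℂ] H) (hT : IsUnit T) :
    Set.BijOn (fun A : H →L[ℂ] H => 1 - Ring.inverse (1 + T * A * ContinuousLinearMap.adjoint T))
      {A : H →L[ℂ] H | IsSelfAdjoint A ∧ 0 ≤ A ∧ A ≤ 1}
      {C : H →L[ℂ] H | IsSelfAdjoint C ∧ 0 ≤ C ∧
        C ≤ Ring.inverse (1 + Ring.inverse (T * ContinuousLinearMap.adjoint T))} ∧
    ∀ A ∈ {A : H →L[ℂ] H | IsSelfAdjoint A ∧ 0 ≤ A ∧ A ≤ 1}, ∀ B ∈ {A : H →L[ℂ] H | IsSelfAdjoint A ∧ 0 ≤ A ∧ A ≤ 1},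
      (A ≤ B ↔ 1 - Ring.inverse (1 + T * A * ContinuousLinearMap.adjoint T) ≤
        1 - Ring.inverse (1 + T * B * ContinuousLinearMap.adjoint T)) := by
  have hadj : ContinuousLinearMap.adjoint T = star T := rfl
  rw [hadj, ← effectMap_one hT]
  simp only [setOf_isSelfAdjoint_and_mem_Icc]
  exact ⟨bijOn_effectMap hT, fun A hA B hB => (effectMap_le_effectMap_iff hT hA.1 hB.1).symm⟩
end

section
/- Let T be an invertible bounded linear operator with ‖T‖ > 1, set S = T/‖T‖ and r = ‖T‖²/(1 + ‖T‖²). Then for every A in the effect algebra [0, I]: (f_r(SS*))⁻¹ = r·(I + (TT*)⁻¹) and r·f_r(S A S*) = I − (I + T A T*)⁻¹. -/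
section

variable {A : Type*} [CStarAlgebra A] [PartialOrder A] [StarOrderedRing A] {r : ℝ} {a : A}

theorem smul_cfc_div_affine_eq_one_sub_inverse (hr0 : 0 ≤ r) (hr1 : r < 1) (ha : 0 ≤ a) :
    r • cfc (fun x : ℝ => x / (r * x + 1 - r)) a = 1 - Ring.inverse (1 + (r / (1 - r)) • a) := by
  have hspec : ∀ x ∈ spectrum ℝ a, 0 ≤ x := fun x hx => spectrum_nonneg_of_nonneg ha hx
  have h1r : 0 < 1 - r := by linarith
  have hden : ∀ x ∈ spectrum ℝ a, 1 + r / (1 - r) * x ≠ 0 := fun x hx => by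
    have hx0 := hspec x hx
    positivity
  have hU : cfc (fun x : ℝ => 1 + r / (1 - r) * x) a = 1 + (r / (1 - r)) • a := by
    rw [cfc_const_add _ _ a, cfc_const_mul_id _ a, map_one]
  rw [← hU, ← cfc_inv _ a hden, ← cfc_const_one ℝ a,
    ← cfc_sub (fun _ => 1) (fun x => (1 + r / (1 - r) * x)⁻¹) a continuousOn_const
      (.inv₀ (by fun_prop) hden),
    ← cfc_smul r (fun x : ℝ => x / (r * x + 1 - r)) a
      (.div (by fun_prop) (by fun_prop) fun x hx => by nlinarith [hspec x hx])]
  refine cfc_congr fun x hx => ?_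
  have hd : r * x + 1 - r ≠ 0 := by nlinarith [hspec x hx]
  rw [smul_eq_mul, show 1 + r / (1 - r) * x = (r * x + 1 - r) / (1 - r) by field_simp; ring]
  field_simp
  ring

theorem inverse_cfc_div_affine_eq_smul (hr0 : 0 < r) (hr1 : r < 1) (ha : 0 ≤ a) (ha' : IsUnit a) :
    Ring.inverse (cfc (fun x : ℝ => x / (r * x + 1 - r)) a) =
      r • (1 + Ring.inverse ((r / (1 - r)) • a)) := by
  have hspec : ∀ x ∈ spectrum ℝ a, 0 < x := fun x hx =>
    (spectrum_nonneg_of_nonneg ha hx).lt_of_ne' fun h => spectrum.zero_notMem ℝ ha' (h ▸ hx)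
  have h1r : 0 < 1 - r := by linarith
  have hs : ∀ x ∈ spectrum ℝ a, r / (1 - r) * x ≠ 0 := fun x hx => by
    have hx0 := hspec x hx
    positivity
  have hf : ∀ x ∈ spectrum ℝ a, x / (r * x + 1 - r) ≠ 0 := fun x hx => by
    have hx0 := hspec x hx
    have hd : 0 < r * x + 1 - r := by nlinarith
    positivity
  rw [← cfc_const_mul_id _ a, ← cfc_inv _ a hs, ← cfc_inv _ a hf
    (.div (by fun_prop) (by fun_prop) fun x hx => by nlinarith [hspec x hx]),
    ← map_one (algebraMap ℝ A),
    ← cfc_const_add 1 (fun x : ℝ => (r / (1 - r) * x)⁻¹) a (.inv₀ (by fun_prop) hs),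
    ← cfc_smul r (fun x : ℝ => 1 + (r / (1 - r) * x)⁻¹) a (by fun_prop)]
  refine cfc_congr fun x hx => ?_
  have hx0 := (hspec x hx).ne'
  have hr0' := hr0.ne'
  have h1r' := h1r.ne'
  simp only [smul_eq_mul]
  field_simp
  ring

end

section

variable {B : Type*} [Ring B] [StarRing B] [Module ℝ B] [StarModule ℝ B] [IsScalarTower ℝ B B]
  [SMulCommClass ℝ B B]

theorem sq_smul_inv_smul_mul_mul_star {c : ℝ} (hc : c ≠ 0) (x y : B) :
    c ^ 2 • ((c⁻¹ • x) * y * star (c⁻¹ • x)) = x * y * star x := by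
  rw [star_smul, star_trivial, smul_mul_assoc, smul_mul_assoc, mul_smul_comm, smul_smul,
    smul_smul, show c ^ 2 * c⁻¹ * c⁻¹ = 1 by field_simp, one_smul]

end

theorem stmt_18_general {H : Type*} [NormedAddCommGroup H] [InnerProductSpace ℂ H] [CompleteSpace H]
    (T : H →L[ℂ] H) (hT : IsUnit T) :
    Ring.inverse (fOp (‖T‖ ^ 2 / (1 + ‖T‖ ^ 2))
        ((‖T‖⁻¹ • T) * ContinuousLinearMap.adjoint (‖T‖⁻¹ • T))) =
      (‖T‖ ^ 2 / (1 + ‖T‖ ^ 2)) • (1 + Ring.inverse (T * ContinuousLinearMap.adjoint T)) ∧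
    ∀ A ∈ {A : H →L[ℂ] H | IsSelfAdjoint A ∧ 0 ≤ A ∧ A ≤ 1},
      (‖T‖ ^ 2 / (1 + ‖T‖ ^ 2)) • fOp (‖T‖ ^ 2 / (1 + ‖T‖ ^ 2))
          ((‖T‖⁻¹ • T) * A * ContinuousLinearMap.adjoint (‖T‖⁻¹ • T)) =
        1 - Ring.inverse (1 + T * A * ContinuousLinearMap.adjoint T) := by
  rcases subsingleton_or_nontrivial H with _ | _
  · exact ⟨Subsingleton.elim _ _, fun _ _ => Subsingleton.elim _ _⟩
  have hc : ‖T‖ ≠ 0 := norm_ne_zero_iff.mpr hT.ne_zero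
  have hr0 : 0 < ‖T‖ ^ 2 / (1 + ‖T‖ ^ 2) := by positivity
  have hr1 : ‖T‖ ^ 2 / (1 + ‖T‖ ^ 2) < 1 := (div_lt_one (by positivity)).mpr (by linarith)
  have hs : ‖T‖ ^ 2 / (1 + ‖T‖ ^ 2) / (1 - ‖T‖ ^ 2 / (1 + ‖T‖ ^ 2)) = ‖T‖ ^ 2 := by
    field_simp
    ring
  simp only [fOp, ← ContinuousLinearMap.star_eq_adjoint]
  constructor
  · have hS : IsUnit (‖T‖⁻¹ • T) := hT.smul (Units.mk0 ‖T‖⁻¹ (inv_ne_zero hc))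
    have hTT : ‖T‖ ^ 2 • ((‖T‖⁻¹ • T) * star (‖T‖⁻¹ • T)) = T * star T := by
      simpa only [mul_one] using sq_smul_inv_smul_mul_mul_star hc T 1
    rw [inverse_cfc_div_affine_eq_smul hr0 hr1 (mul_star_self_nonneg _) (hS.mul hS.star), hs, hTT]
  · rintro A ⟨-, hA, -⟩
    rw [smul_cfc_div_affine_eq_one_sub_inverse hr0.le hr1 (star_right_conjugate_nonneg hA _), hs,
      sq_smul_inv_smul_mul_mul_star hc]

theorem stmt_18 {H : Type*} [NormedAddCommGroup H] [InnerProductSpace ℂ H] [CompleteSpace H]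
    (T : H →L[ℂ] H) (hT : IsUnit T) (hTn : 1 < ‖T‖) :
    Ring.inverse (fOp (‖T‖ ^ 2 / (1 + ‖T‖ ^ 2))
        ((‖T‖⁻¹ • T) * ContinuousLinearMap.adjoint (‖T‖⁻¹ • T))) =
      (‖T‖ ^ 2 / (1 + ‖T‖ ^ 2)) • (1 + Ring.inverse (T * ContinuousLinearMap.adjoint T)) ∧
    ∀ A ∈ {A : H →L[ℂ] H | IsSelfAdjoint A ∧ 0 ≤ A ∧ A ≤ 1},
      (‖T‖ ^ 2 / (1 + ‖T‖ ^ 2)) • fOp (‖T‖ ^ 2 / (1 + ‖T‖ ^ 2))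
          ((‖T‖⁻¹ • T) * A * ContinuousLinearMap.adjoint (‖T‖⁻¹ • T)) =
        1 - Ring.inverse (1 + T * A * ContinuousLinearMap.adjoint T) :=
  stmt_18_general T hT
end
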